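/- Characteristic-formula theorem: let M and M' be finite simplicial models over a finite set At of atomic propositions, and □ ∈ {K, D}. For all n ∈ ℕ, X ∈ F(M) and X' ∈ F(M'): X S^□_n X' if and only if M', X' ⊭ Φ^□_M(n, X). -/
import Mathlib


/-- A simplicial model: a pure chromatic simplicial complex, colored by the
agents in `Agent`, whose vertices are labeled by sets of atomic propositions.
Each atomic proposition belongs to an agent (`agentOf`), and the label of a
vertex only contains atoms of the color of that vertex. -/
structure SimplicialModel (Agent Atom Vertex : Type) [Fintype Agent]
    [DecidableEq Vertex] where
  simplices : Set (Finset Vertex)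
  chi : Vertex → Agent
  label : Vertex → Set Atom
  agentOf : Atom → Agent
  simplex_nonempty : ∀ X ∈ simplices, X.Nonempty
  down_closed : ∀ X ∈ simplices, ∀ Y : Finset Vertex, Y ⊆ X → Y.Nonempty → Y ∈ simplices
  chi_injOn : ∀ X ∈ simplices, Set.InjOn chi ↑X
  pure : ∀ X ∈ simplices, ∃ F ∈ simplices, X ⊆ F ∧ F.card = Fintype.card Agent
  label_agent : ∀ v, ∀ p ∈ label v, agentOf p = chi v

namespace SimplicialModel

variable {Agent Atom Vertex Vertex' : Type} [Fintype Agent]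
  [DecidableEq Vertex] [DecidableEq Vertex']

/-- The facets (maximal simplices) of a simplicial model: the simplices with
exactly `|Agent|` vertices. -/
def facets (M : SimplicialModel Agent Atom Vertex) : Set (Finset Vertex) :=
  {X ∈ M.simplices | X.card = Fintype.card Agent}

/-- The type of facets of a simplicial model. -/
def Facet (M : SimplicialModel Agent Atom Vertex) : Type := {X : Finset Vertex // X ∈ M.facets}

/-- The labeling of a facet: union of the labels of its vertices. -/
def flabel (M : SimplicialModel Agent Atom Vertex) (X : M.Facet) : Set Atom :=
  ⋃ v ∈ (X.1 : Finset Vertex), M.label v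

/-- `χ(X ∩ Y)`: the set of colors of the common vertices of two facets. -/
def chiInter (M : SimplicialModel Agent Atom Vertex) (X Y : M.Facet) : Set Agent :=
  M.chi '' ↑(X.1 ∩ Y.1)

/-- The indistinguishability relation `X ∼ₐ Y` : `a ∈ χ(X ∩ Y)`. -/
def indist (M : SimplicialModel Agent Atom Vertex) (a : Agent) (X Y : M.Facet) : Prop :=
  a ∈ M.chiInter X Y

/-- A morphism of simplicial models: maps simplices to simplices, preserves
colors and preserves labels. -/
def IsMorphism (M : SimplicialModel Agent Atom Vertex) (M' : SimplicialModel Agent Atom Vertex')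
    (f : Vertex → Vertex') : Prop :=
  (∀ X ∈ M.simplices, X.image f ∈ M'.simplices) ∧
  (∀ v, M'.chi (f v) = M.chi v) ∧
  (∀ v, M'.label (f v) = M.label v)

/-- Smart constructor for a simplicial model: the complex generated by a given
set of facets, each of which has `|Agent|` vertices with pairwise distinct colors. -/
def ofFacets [Nonempty Agent] (Fs : Set (Finset Vertex)) (chi : Vertex → Agent)
    (label : Vertex → Set Atom) (agentOf : Atom → Agent)
    (hcard : ∀ F ∈ Fs, F.card = Fintype.card Agent)
    (hinj : ∀ F ∈ Fs, Set.InjOn chi ↑F)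
    (hlab : ∀ v, ∀ p ∈ label v, agentOf p = chi v) :
    SimplicialModel Agent Atom Vertex where
  simplices := {X | X.Nonempty ∧ ∃ F ∈ Fs, X ⊆ F}
  chi := chi
  label := label
  agentOf := agentOf
  simplex_nonempty := fun _ hX => hX.1
  down_closed := by
    rintro X ⟨-, F, hF, hXF⟩ Y hYX hY
    exact ⟨hY, F, hF, hYX.trans hXF⟩
  chi_injOn := by
    rintro X ⟨-, F, hF, hXF⟩
    exact (hinj F hF).mono (Finset.coe_subset.mpr hXF)
  pure := by
    rintro X ⟨-, F, hF, hXF⟩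
    refine ⟨F, ⟨?_, F, hF, subset_rfl⟩, hXF, hcard F hF⟩
    rw [← Finset.card_pos, hcard F hF]
    exact Fintype.card_pos
  label_agent := hlab

end SimplicialModel

/-- The language `L_K⁺` of positive epistemic formulas:
`φ ::= p | ¬p | φ ∨ φ | φ ∧ φ | K_a φ`. -/
inductive PosFormula (Agent Atom : Type) : Type where
  | atom : Atom → PosFormula Agent Atom
  | natom : Atom → PosFormula Agent Atom
  | or : PosFormula Agent Atom → PosFormula Agent Atom → PosFormula Agent Atom
  | and : PosFormula Agent Atom → PosFormula Agent Atom → PosFormula Agent Atom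
  | know : Agent → PosFormula Agent Atom → PosFormula Agent Atom

/-- The language `L_D⁺` of positive epistemic formulas with distributed knowledge:
`φ ::= p | ¬p | φ ∨ φ | φ ∧ φ | D_A φ`. -/
inductive PosFormulaD (Agent Atom : Type) : Type where
  | atom : Atom → PosFormulaD Agent Atom
  | natom : Atom → PosFormulaD Agent Atom
  | or : PosFormulaD Agent Atom → PosFormulaD Agent Atom → PosFormulaD Agent Atom
  | and : PosFormulaD Agent Atom → PosFormulaD Agent Atom → PosFormulaD Agent Atom
  | dknow : Set Agent → PosFormulaD Agent Atom → PosFormulaD Agent Atom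

namespace SimplicialModel

variable {Agent Atom Vertex Vertex' : Type} [Fintype Agent]
  [DecidableEq Vertex] [DecidableEq Vertex']

/-- Truth of a positive formula of `L_K⁺` at a facet of a simplicial model. -/
def satK (M : SimplicialModel Agent Atom Vertex) :
    PosFormula Agent Atom → M.Facet → Prop
  | .atom p, X => p ∈ M.flabel X
  | .natom p, X => p ∉ M.flabel X
  | .or φ ψ, X => M.satK φ X ∨ M.satK ψ X
  | .and φ ψ, X => M.satK φ X ∧ M.satK ψ X
  | .know a φ, X => ∀ Y : M.Facet, M.indist a X Y → M.satK φ Y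

/-- Truth of a positive formula of `L_D⁺` at a facet of a simplicial model. -/
def satD (M : SimplicialModel Agent Atom Vertex) :
    PosFormulaD Agent Atom → M.Facet → Prop
  | .atom p, X => p ∈ M.flabel X
  | .natom p, X => p ∉ M.flabel X
  | .or φ ψ, X => M.satD φ X ∨ M.satD ψ X
  | .and φ ψ, X => M.satD φ X ∧ M.satD ψ X
  | .dknow A φ, X => ∀ Y : M.Facet, A ⊆ M.chiInter X Y → M.satD φ Y

/-- A K-simulation of `M` by `M'`: (Atom) related facets have the same labels;
(Forth) if `X R X'` and `X ∼ₐ Y` then there is `Y'` with `Y R Y'` and `X' ∼ₐ Y'`. -/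
def IsKSimulation (M : SimplicialModel Agent Atom Vertex) (M' : SimplicialModel Agent Atom Vertex')
    (R : M.Facet → M'.Facet → Prop) : Prop :=
  (∀ X X', R X X' → M.flabel X = M'.flabel X') ∧
  (∀ (a : Agent) X Y X', R X X' → M.indist a X Y →
    ∃ Y', R Y Y' ∧ M'.indist a X' Y')

/-- A D-simulation of `M` by `M'`: (Atom) related facets have the same labels;
(D-Forth) if `X R X'` then for every facet `Y` there is `Y'` with `Y R Y'` and
`χ(X ∩ Y) ⊆ χ'(X' ∩ Y')`. -/
def IsDSimulation (M : SimplicialModel Agent Atom Vertex) (M' : SimplicialModel Agent Atom Vertex')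
    (R : M.Facet → M'.Facet → Prop) : Prop :=
  (∀ X X', R X X' → M.flabel X = M'.flabel X') ∧
  (∀ X X', R X X' → ∀ Y, ∃ Y', R Y Y' ∧ M.chiInter X Y ⊆ M'.chiInter X' Y')

/-- A relation on facets is total if every facet of `M` is related to some facet of `M'`. -/
def TotalRel (M : SimplicialModel Agent Atom Vertex) (M' : SimplicialModel Agent Atom Vertex')
    (R : M.Facet → M'.Facet → Prop) : Prop :=
  ∀ X, ∃ X', R X X'

end SimplicialModel

/-- Modal depth of a formula of `L_K⁺`. -/
def PosFormula.deg {Agent Atom : Type} : PosFormula Agent Atom → ℕ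
  | .atom _ => 0
  | .natom _ => 0
  | .or φ ψ => max φ.deg ψ.deg
  | .and φ ψ => max φ.deg ψ.deg
  | .know _ φ => φ.deg + 1

/-- Modal depth of a formula of `L_D⁺`. -/
def PosFormulaD.deg {Agent Atom : Type} : PosFormulaD Agent Atom → ℕ
  | .atom _ => 0
  | .natom _ => 0
  | .or φ ψ => max φ.deg ψ.deg
  | .and φ ψ => max φ.deg ψ.deg
  | .dknow _ φ => φ.deg + 1

namespace SimplicialModel

variable {Agent Atom Vertex Vertex' : Type} [Fintype Agent]
  [DecidableEq Vertex] [DecidableEq Vertex']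

/-- The condition (Atom): related facets carry the same labels. -/
def AtomCond (M : SimplicialModel Agent Atom Vertex) (M' : SimplicialModel Agent Atom Vertex')
    (R : M.Facet → M'.Facet → Prop) : Prop :=
  ∀ X X', R X X' → M.flabel X = M'.flabel X'

/-- `n`-K-simulations, defined by induction on `n`. -/
def IsNKSimulation (M : SimplicialModel Agent Atom Vertex)
    (M' : SimplicialModel Agent Atom Vertex') :
    ℕ → (M.Facet → M'.Facet → Prop) → Prop
  | 0, R => AtomCond M M' R
  | n + 1, R => AtomCond M M' R ∧
      ∀ (a : Agent) X Y X', R X X' → M.indist a X Y →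
        ∃ (R' : M.Facet → M'.Facet → Prop) (Y' : M'.Facet),
          IsNKSimulation M M' n R' ∧ R' Y Y' ∧ M'.indist a X' Y'

/-- `n`-D-simulations, defined by induction on `n`. -/
def IsNDSimulation (M : SimplicialModel Agent Atom Vertex)
    (M' : SimplicialModel Agent Atom Vertex') :
    ℕ → (M.Facet → M'.Facet → Prop) → Prop
  | 0, R => AtomCond M M' R
  | n + 1, R =>
      ∀ X X', R X X' → ∀ Y : M.Facet,
        ∃ (R' : M.Facet → M'.Facet → Prop) (Y' : M'.Facet),
          IsNDSimulation M M' n R' ∧ R' Y Y' ∧ M.chiInter X Y ⊆ M'.chiInter X' Y'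

/-- The operator `f^K` on relations between facets. -/
def fK (M : SimplicialModel Agent Atom Vertex) (M' : SimplicialModel Agent Atom Vertex')
    (R : M.Facet → M'.Facet → Prop) : M.Facet → M'.Facet → Prop :=
  fun X X' => ∀ (a : Agent) (Y : M.Facet), M.indist a X Y →
    ∃ Y', R Y Y' ∧ M'.indist a X' Y'

/-- The operator `f^D` on relations between facets. -/
def fD (M : SimplicialModel Agent Atom Vertex) (M' : SimplicialModel Agent Atom Vertex')
    (R : M.Facet → M'.Facet → Prop) : M.Facet → M'.Facet → Prop :=
  fun X X' => ∀ Y : M.Facet, ∃ Y', R Y Y' ∧ M.chiInter X Y ⊆ M'.chiInter X' Y'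

/-- The descending sequence `S^K_n`: `S^K_0 = {(X,X') : l(X) = l'(X')}` and
`S^K_{n+1} = S^K_0 ∩ f^K(S^K_n)`. -/
def SK (M : SimplicialModel Agent Atom Vertex) (M' : SimplicialModel Agent Atom Vertex') :
    ℕ → M.Facet → M'.Facet → Prop
  | 0 => fun X X' => M.flabel X = M'.flabel X'
  | n + 1 => fun X X' => M.flabel X = M'.flabel X' ∧ fK M M' (SK M M' n) X X'

/-- The descending sequence `S^D_n`: `S^D_0 = {(X,X') : l(X) = l'(X')}` and
`S^D_{n+1} = f^D(S^D_n)`. -/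
def SD (M : SimplicialModel Agent Atom Vertex) (M' : SimplicialModel Agent Atom Vertex') :
    ℕ → M.Facet → M'.Facet → Prop
  | 0 => fun X X' => M.flabel X = M'.flabel X'
  | n + 1 => fD M M' (SD M M' n)

end SimplicialModel

attribute [local instance] Classical.propDecidable

namespace SimplicialModel

variable {Agent Atom Vertex : Type} [Fintype Agent] [DecidableEq Vertex]

noncomputable instance instFintypeFacet (M : SimplicialModel Agent Atom Vertex)
    [Finite Vertex] : Fintype M.Facet := by
  have : Fintype Vertex := Fintype.ofFinite _
  have : Finite (Finset Vertex) := inferInstance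
  have : Finite M.Facet := by unfold Facet; exact Subtype.finite
  exact Fintype.ofFinite _

/-- Disjunction of a finite list of formulas of `L_K⁺`; the empty disjunction
is represented by the unsatisfiable positive formula `p ∧ ¬p`. -/
noncomputable def bigOrK [Nonempty Atom] (l : List (PosFormula Agent Atom)) :
    PosFormula Agent Atom :=
  l.foldr .or
    ((PosFormula.atom (Classical.arbitrary Atom)).and
      (PosFormula.natom (Classical.arbitrary Atom)))

/-- Disjunction of a finite list of formulas of `L_D⁺`; the empty disjunction
is represented by the unsatisfiable positive formula `p ∧ ¬p`. -/
noncomputable def bigOrD [Nonempty Atom] (l : List (PosFormulaD Agent Atom)) :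
    PosFormulaD Agent Atom :=
  l.foldr .or
    ((PosFormulaD.atom (Classical.arbitrary Atom)).and
      (PosFormulaD.natom (Classical.arbitrary Atom)))

/-- `Φ^□(0, X) = ⋁_{p ∈ l(X)} ¬p ∨ ⋁_{p ∈ At ∖ l(X)} p` (as a formula of `L_K⁺`). -/
noncomputable def PhiK0 (M : SimplicialModel Agent Atom Vertex) [Fintype Atom] [Nonempty Atom]
    (X : M.Facet) : PosFormula Agent Atom :=
  (bigOrK (((Set.toFinite (M.flabel X)).toFinset.toList).map PosFormula.natom)).or
    (bigOrK (((Set.toFinite (M.flabel X)ᶜ).toFinset.toList).map PosFormula.atom))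

/-- `Φ^□(0, X) = ⋁_{p ∈ l(X)} ¬p ∨ ⋁_{p ∈ At ∖ l(X)} p` (as a formula of `L_D⁺`). -/
noncomputable def PhiD0 (M : SimplicialModel Agent Atom Vertex) [Fintype Atom] [Nonempty Atom]
    (X : M.Facet) : PosFormulaD Agent Atom :=
  (bigOrD (((Set.toFinite (M.flabel X)).toFinset.toList).map PosFormulaD.natom)).or
    (bigOrD (((Set.toFinite (M.flabel X)ᶜ).toFinset.toList).map PosFormulaD.atom))

/-- The characteristic formulas `Φ^K(n, X)`:
`Φ^K(n+1, X) = Φ^K(0, X) ∨ ⋁_{a ∈ Π} ⋁_{Y ∈ F(M), X ∼ₐ Y} K_a Φ^K(n, Y)`. -/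
noncomputable def PhiK (M : SimplicialModel Agent Atom Vertex)
    [Finite Vertex] [Fintype Atom] [Nonempty Atom] :
    ℕ → M.Facet → PosFormula Agent Atom
  | 0, X => PhiK0 M X
  | n + 1, X => (PhiK0 M X).or (bigOrK
      ((((Finset.univ : Finset (Agent × M.Facet)).filter
          (fun p => M.indist p.1 X p.2)).toList).map
        (fun p => PosFormula.know p.1 (PhiK M n p.2))))

/-- The characteristic formulas `Φ^D(n, X)`:
`Φ^D(n+1, X) = ⋁_{Y ∈ F(M)} D_{χ(X ∩ Y)} Φ^D(n, Y)`. -/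
noncomputable def PhiD (M : SimplicialModel Agent Atom Vertex)
    [Finite Vertex] [Fintype Atom] [Nonempty Atom] :
    ℕ → M.Facet → PosFormulaD Agent Atom
  | 0, X => PhiD0 M X
  | n + 1, X => bigOrD
      (((Finset.univ : Finset M.Facet).toList).map
        (fun Y => PosFormulaD.dknow (M.chiInter X Y) (PhiD M n Y)))

end SimplicialModel

namespace SimplicialModel

variable {Agent Atom Vertex Vertex' : Type} [Fintype Agent]
  [DecidableEq Vertex] [DecidableEq Vertex']

lemma satK_bigOrK [Nonempty Atom] (M' : SimplicialModel Agent Atom Vertex')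
    (l : List (PosFormula Agent Atom)) (X' : M'.Facet) :
    M'.satK (bigOrK l) X' ↔ ∃ φ ∈ l, M'.satK φ X' := by
  induction l with
  | nil => simp [bigOrK, satK]
  | cons φ l ih =>
    show M'.satK (φ.or (bigOrK l)) X' ↔ _
    simp [satK, ih]

lemma satD_bigOrD [Nonempty Atom] (M' : SimplicialModel Agent Atom Vertex')
    (l : List (PosFormulaD Agent Atom)) (X' : M'.Facet) :
    M'.satD (bigOrD l) X' ↔ ∃ φ ∈ l, M'.satD φ X' := by
  induction l with
  | nil => simp [bigOrD, satD]
  | cons φ l ih =>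
    show M'.satD (φ.or (bigOrD l)) X' ↔ _
    simp [satD, ih]

lemma satK_PhiK0 [Fintype Atom] [Nonempty Atom] (M : SimplicialModel Agent Atom Vertex)
    (M' : SimplicialModel Agent Atom Vertex') (X : M.Facet) (X' : M'.Facet) :
    M'.satK (PhiK0 M X) X' ↔ M.flabel X ≠ M'.flabel X' := by
  show M'.satK (PosFormula.or _ _) X' ↔ _
  simp only [satK, satK_bigOrK, List.mem_map, Finset.mem_toList,
    Set.Finite.mem_toFinset, Set.mem_compl_iff]
  constructor
  · rintro (⟨φ, ⟨p, hp, rfl⟩, h⟩ | ⟨φ, ⟨p, hp, rfl⟩, h⟩) heq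
    · exact h (heq ▸ hp)
    · exact hp (heq ▸ h)
  · intro hne
    by_cases hsub : M.flabel X ⊆ M'.flabel X'
    · have h2 : ¬ M'.flabel X' ⊆ M.flabel X := fun h => hne (hsub.antisymm h)
      rcases Set.not_subset.mp h2 with ⟨p, hp1, hp2⟩
      exact Or.inr ⟨_, ⟨p, hp2, rfl⟩, hp1⟩
    · rcases Set.not_subset.mp hsub with ⟨p, hp1, hp2⟩
      exact Or.inl ⟨_, ⟨p, hp1, rfl⟩, hp2⟩

lemma satD_PhiD0 [Fintype Atom] [Nonempty Atom] (M : SimplicialModel Agent Atom Vertex)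
    (M' : SimplicialModel Agent Atom Vertex') (X : M.Facet) (X' : M'.Facet) :
    M'.satD (PhiD0 M X) X' ↔ M.flabel X ≠ M'.flabel X' := by
  show M'.satD (PosFormulaD.or _ _) X' ↔ _
  simp only [satD, satD_bigOrD, List.mem_map, Finset.mem_toList,
    Set.Finite.mem_toFinset, Set.mem_compl_iff]
  constructor
  · rintro (⟨φ, ⟨p, hp, rfl⟩, h⟩ | ⟨φ, ⟨p, hp, rfl⟩, h⟩) heq
    · exact h (heq ▸ hp)
    · exact hp (heq ▸ h)
  · intro hne
    by_cases hsub : M.flabel X ⊆ M'.flabel X'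
    · have h2 : ¬ M'.flabel X' ⊆ M.flabel X := fun h => hne (hsub.antisymm h)
      rcases Set.not_subset.mp h2 with ⟨p, hp1, hp2⟩
      exact Or.inr ⟨_, ⟨p, hp2, rfl⟩, hp1⟩
    · rcases Set.not_subset.mp hsub with ⟨p, hp1, hp2⟩
      exact Or.inl ⟨_, ⟨p, hp1, rfl⟩, hp2⟩

end SimplicialModel

open SimplicialModel in
/-- **Characteristic-formula theorem**: for finite simplicial models `M`, `M'`
over a finite set of atomic propositions, for each `□ ∈ {K, D}`, all `n ∈ ℕ`,
`X ∈ F(M)` and `X' ∈ F(M')`: `X S^□_n X'` iff `M', X' ⊭ Φ^□_M(n, X)`. -/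
theorem Sn_iff_not_sat_Phi
    {Agent Atom Vertex Vertex' : Type} [Fintype Agent] [Nonempty Agent]
    [DecidableEq Vertex] [DecidableEq Vertex'] [Finite Vertex] [Finite Vertex']
    [Fintype Atom] [Nonempty Atom]
    (M : SimplicialModel Agent Atom Vertex) (M' : SimplicialModel Agent Atom Vertex')
    (n : ℕ) (X : M.Facet) (X' : M'.Facet) :
    (SK M M' n X X' ↔ ¬ M'.satK (PhiK M n X) X') ∧
    (SD M M' n X X' ↔ ¬ M'.satD (PhiD M n X) X') := by
  induction n generalizing X X' with
  | zero =>
    constructor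
    · rw [show PhiK M 0 X = PhiK0 M X from rfl, satK_PhiK0, not_not]; rfl
    · rw [show PhiD M 0 X = PhiD0 M X from rfl, satD_PhiD0, not_not]; rfl
  | succ n ih =>
    constructor
    · show (M.flabel X = M'.flabel X' ∧ fK M M' (SK M M' n) X X') ↔ _
      have hbig : M'.satK (bigOrK
          ((((Finset.univ : Finset (Agent × M.Facet)).filter
              (fun p => M.indist p.1 X p.2)).toList).map
            (fun p => PosFormula.know p.1 (PhiK M n p.2)))) X' ↔
          ∃ a Y, M.indist a X Y ∧ M'.satK (.know a (PhiK M n Y)) X' := by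
        rw [satK_bigOrK]
        constructor
        · rintro ⟨φ, hmem, hsat⟩
          rw [List.mem_map] at hmem
          obtain ⟨⟨a, Y⟩, hmem, rfl⟩ := hmem
          rw [Finset.mem_toList, Finset.mem_filter] at hmem
          exact ⟨a, Y, hmem.2, hsat⟩
        · rintro ⟨a, Y, hind, hsat⟩
          exact ⟨_, List.mem_map.mpr ⟨(a, Y), by simp [hind], rfl⟩, hsat⟩
      rw [show PhiK M (n+1) X = (PhiK0 M X).or _ from rfl,
        show ∀ φ ψ, M'.satK (PosFormula.or φ ψ) X' = (M'.satK φ X' ∨ M'.satK ψ X')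
          from fun _ _ => rfl,
        not_or, satK_PhiK0, not_not, hbig]
      constructor
      · rintro ⟨heq, hf⟩
        refine ⟨heq, ?_⟩
        rintro ⟨a, Y, hind, hsat⟩
        rcases hf a Y hind with ⟨Y', hS, hind'⟩
        exact (ih Y Y').1.mp hS (hsat Y' hind')
      · rintro ⟨heq, h⟩
        refine ⟨heq, fun a Y hind => ?_⟩
        by_contra hc
        refine h ⟨a, Y, hind, ?_⟩
        show ∀ Y', M'.indist a X' Y' → M'.satK (PhiK M n Y) Y'
        intro Y' hind'
        by_contra hns
        exact hc ⟨Y', (ih Y Y').1.mpr hns, hind'⟩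
    · show fD M M' (SD M M' n) X X' ↔ _
      have hbig : M'.satD (bigOrD
          (((Finset.univ : Finset M.Facet).toList).map
            (fun Y => PosFormulaD.dknow (M.chiInter X Y) (PhiD M n Y)))) X' ↔
          ∃ Y, M'.satD (.dknow (M.chiInter X Y) (PhiD M n Y)) X' := by
        rw [satD_bigOrD]
        constructor
        · rintro ⟨φ, hmem, hsat⟩
          rw [List.mem_map] at hmem
          obtain ⟨Y, -, rfl⟩ := hmem
          exact ⟨Y, hsat⟩
        · rintro ⟨Y, hsat⟩
          exact ⟨_, List.mem_map.mpr ⟨Y, by simp, rfl⟩, hsat⟩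
      rw [show PhiD M (n+1) X = bigOrD _ from rfl, hbig]
      constructor
      · rintro hf ⟨Y, hsat⟩
        rcases hf Y with ⟨Y', hS, hsub⟩
        exact (ih Y Y').2.mp hS (hsat Y' hsub)
      · intro h Y
        by_contra hc
        refine h ⟨Y, ?_⟩
        show ∀ Y', M.chiInter X Y ⊆ M'.chiInter X' Y' → M'.satD (PhiD M n Y) Y'
        intro Y' hsub
        by_contra hns
        exact hc ⟨Y', (ih Y Y').2.mpr hns, hsub⟩
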